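/- Let Δ ⊆ ℝ⁴ be a reflexive polytope and let v₁, v₂, v₃ ∈ Δ ∩ ℤ⁴ be ℝ-linearly independent points with Cone(v₁,v₂,v₃) ∩ Δ ∩ ℤ⁴ = {0, v₁, v₂, v₃}, and suppose v₁, v₂, v₃ do not lie in a common proper face of Δ. Then there exist a vertex (extreme point) m of Δ* with m ∈ ℤ⁴ and distinct indices i, j ∈ {1, 2, 3} such that ⟨m, vᵢ⟩ = ⟨m, vⱼ⟩ = −1 and ⟨m, v_k⟩ = 0 for the remaining index k ∈ {1, 2, 3}. -/

import Mathlib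

open Pointwise

/-- The standard pairing `⟨m,n⟩ = ∑ i, mᵢ nᵢ` on `ℝ^d`. -/
def pairing {d : ℕ} (m n : Fin d → ℝ) : ℝ := ∑ i, m i * n i

/-- A point of `ℝ^d` is a lattice point if all coordinates are integers. -/
def IsLatticePt {d : ℕ} (v : Fin d → ℝ) : Prop := ∀ i, ∃ n : ℤ, v i = (n : ℝ)

/-- The set of lattice points of `ℝ^d`. -/
def latticePts (d : ℕ) : Set (Fin d → ℝ) := {v | IsLatticePt v}

/-- A lattice polytope is the convex hull of finitely many lattice points. -/
def IsLatticePolytope {d : ℕ} (Δ : Set (Fin d → ℝ)) : Prop :=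
  ∃ S : Finset (Fin d → ℝ), (S : Set (Fin d → ℝ)) ⊆ latticePts d ∧
    Δ = convexHull ℝ (S : Set (Fin d → ℝ))

/-- The dual polytope `Δ* = {m : ⟨m,n⟩ ≥ -1 for all n ∈ Δ}`. -/
def dualPolytope {d : ℕ} (Δ : Set (Fin d → ℝ)) : Set (Fin d → ℝ) :=
  {m | ∀ n ∈ Δ, -1 ≤ pairing m n}

/-- A reflexive polytope: a lattice polytope with `0` in its interior
whose dual polytope is again a lattice polytope. -/
def IsReflexive {d : ℕ} (Δ : Set (Fin d → ℝ)) : Prop :=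
  IsLatticePolytope Δ ∧ (0 : Fin d → ℝ) ∈ interior Δ ∧ IsLatticePolytope (dualPolytope Δ)

/-- `Cone(v₁,…,v_k) = {r₁v₁ + ⋯ + r_kv_k : rᵢ ≥ 0}`. -/
def coneOf {d k : ℕ} (v : Fin k → (Fin d → ℝ)) : Set (Fin d → ℝ) :=
  {x | ∃ r : Fin k → ℝ, (∀ i, 0 ≤ r i) ∧ x = ∑ i, r i • v i}

/-- `r·∂Δ`, the frontier (topological boundary) of the dilate `rΔ`. -/
def bdry {d : ℕ} (r : ℝ) (Δ : Set (Fin d → ℝ)) : Set (Fin d → ℝ) := frontier (r • Δ)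

/-- The points of `S` lie in a common proper face of `Δ`: there is `u` with
`⟨u,x⟩ ≤ 1` on `Δ` and `⟨u,v⟩ = 1` for all `v ∈ S`. -/
def InCommonFace {d : ℕ} (Δ : Set (Fin d → ℝ)) (S : Set (Fin d → ℝ)) : Prop :=
  ∃ u : Fin d → ℝ, (∀ x ∈ Δ, pairing u x ≤ 1) ∧ ∀ v ∈ S, pairing u v = 1

/-- Coordinatewise cast of an integer vector to a real vector. -/
def toRealVec {d : ℕ} (n : Fin d → ℤ) : Fin d → ℝ := fun i => (n i : ℝ)

/-!
The lattice point `x = v₁ + v₂ + v₃` lies in `Cone(v₁,v₂,v₃)` and, by linear independence, is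
neither `0` nor some `vᵢ`; hence `x ∉ Δ`. Separating `x` from `Δ` gives a point of `Δ*` pairing
with `x` below `-1`, and minimizing `⟨·, x⟩` over the compact set `Δ*` moves it to a vertex `m`,
which is a lattice point because `Δ` is reflexive. The integers `⟨m, vᵢ⟩` are `≥ -1` with sum
`≤ -2`, and they are not all `-1`, since then `-m` would cut out a common face containing the
`vᵢ`. So they are `-1, -1, 0` in some order.
-/

lemma pairing_eq_dotProduct {d : ℕ} (m n : Fin d → ℝ) : pairing m n = m ⬝ᵥ n := rfl

lemma pairing_neg_left {d : ℕ} (m n : Fin d → ℝ) : pairing (-m) n = -pairing m n :=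
  neg_dotProduct m n

lemma isLatticePt_sum {d k : ℕ} {v : Fin k → Fin d → ℝ} (hv : ∀ i, IsLatticePt (v i)) :
    IsLatticePt (∑ i, v i) := by
  choose n hn using hv
  exact fun j => ⟨∑ i, n i j, by simp [Finset.sum_apply, hn]⟩

lemma IsLatticePt.exists_pairing_eq_intCast {d : ℕ} {m w : Fin d → ℝ} (hm : IsLatticePt m)
    (hw : IsLatticePt w) : ∃ z : ℤ, pairing m w = z := by
  choose a ha using hm
  choose b hb using hw
  exact ⟨∑ i, a i * b i, by simp [pairing, ha, hb]⟩

lemma exists_pairing_eq_apply {d : ℕ} (f : StrongDual ℝ (Fin d → ℝ)) :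
    ∃ w : Fin d → ℝ, ∀ y, pairing w y = f y :=
  ⟨(dotProductEquiv ℝ (Fin d)).symm f.toLinearMap, fun y => by
    rw [pairing_eq_dotProduct, ← dotProductEquiv_apply_apply, LinearEquiv.apply_symm_apply]
    rfl⟩

theorem exists_mem_dualPolytope_pairing_lt {d : ℕ} {Δ : Set (Fin d → ℝ)} {x : Fin d → ℝ}
    (hconv : Convex ℝ Δ) (hclosed : IsClosed Δ) (h0 : 0 ∈ Δ) (hx : x ∉ Δ) :
    ∃ m ∈ dualPolytope Δ, pairing m x < -1 := by
  obtain ⟨f, u, hfΔ, hfx⟩ := geometric_hahn_banach_closed_point hconv hclosed hx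
  have hu : 0 < u := by simpa using hfΔ 0 h0
  obtain ⟨w, hw⟩ := exists_pairing_eq_apply f
  have hpair : ∀ y, pairing (-u⁻¹ • w) y = -(f y / u) := fun y => by
    rw [pairing_eq_dotProduct, neg_smul, neg_dotProduct, smul_dotProduct, ← pairing_eq_dotProduct,
      hw, smul_eq_mul, inv_mul_eq_div]
  refine ⟨-u⁻¹ • w, fun y hy => ?_, ?_⟩
  · rw [hpair, neg_le_neg_iff, div_le_one hu]
    exact (hfΔ y hy).le
  · rw [hpair, neg_lt_neg_iff, one_lt_div hu]
    exact hfx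

theorem IsCompact.exists_mem_extremePoints_le {E : Type*} [AddCommGroup E] [Module ℝ E]
    [TopologicalSpace E] [T2Space E] [IsTopologicalAddGroup E] [ContinuousSMul ℝ E]
    [LocallyConvexSpace ℝ E] {s : Set E} (hs : IsCompact s) (l : StrongDual ℝ E) {y : E}
    (hy : y ∈ s) : ∃ e ∈ s.extremePoints ℝ, l e ≤ l y := by
  have hB : IsExposed ℝ s ((-l).toExposed s) := ContinuousLinearMap.toExposed.isExposed
  obtain ⟨p, hp, hpmin⟩ := hs.exists_isMinOn ⟨y, hy⟩ l.continuous.continuousOn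
  obtain ⟨e, he⟩ := (hB.isCompact hs).extremePoints_nonempty
    ⟨p, hp, fun z hz => neg_le_neg (hpmin hz)⟩
  have heB : e ∈ (-l).toExposed s := extremePoints_subset he
  exact ⟨e, hB.isExtreme.extremePoints_subset_extremePoints he, neg_le_neg_iff.1 (heB.2 y hy)⟩

namespace IsLatticePolytope

variable {d : ℕ} {P : Set (Fin d → ℝ)}

lemma convex (hP : IsLatticePolytope P) : Convex ℝ P := by
  obtain ⟨S, -, rfl⟩ := hP
  exact convex_convexHull ℝ _

lemma isCompact (hP : IsLatticePolytope P) : IsCompact P := by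
  obtain ⟨S, -, rfl⟩ := hP
  exact S.finite_toSet.isCompact_convexHull ℝ

lemma extremePoints_subset_latticePts (hP : IsLatticePolytope P) :
    P.extremePoints ℝ ⊆ latticePts d := by
  obtain ⟨S, hS, rfl⟩ := hP
  exact extremePoints_convexHull_subset.trans hS

end IsLatticePolytope

theorem IsReflexive.exists_extremePoint_pairing_lt {d : ℕ} {Δ : Set (Fin d → ℝ)}
    (hΔ : IsReflexive Δ) {x : Fin d → ℝ} (hx : x ∉ Δ) :
    ∃ m : Fin d → ℝ, IsLatticePt m ∧ m ∈ (dualPolytope Δ).extremePoints ℝ ∧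
      pairing m x < -1 := by
  obtain ⟨hP, h0, hP'⟩ := hΔ
  obtain ⟨m₀, hm₀, hm₀x⟩ :=
    exists_mem_dualPolytope_pairing_lt hP.convex hP.isCompact.isClosed (interior_subset h0) hx
  obtain ⟨e, he, hle⟩ := hP'.isCompact.exists_mem_extremePoints_le
    (LinearMap.toContinuousLinearMap (dotProductEquiv ℝ (Fin d) x)) hm₀
  refine ⟨e, hP'.extremePoints_subset_latticePts he, he, ?_⟩
  simp only [LinearMap.coe_toContinuousLinearMap', dotProductEquiv_apply_apply] at hle
  rw [pairing_eq_dotProduct, dotProduct_comm] at hm₀x ⊢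
  linarith

lemma inCommonFace_of_pairing_eq_neg_one {d : ℕ} {Δ S : Set (Fin d → ℝ)} {m : Fin d → ℝ}
    (hm : m ∈ dualPolytope Δ) (hS : ∀ v ∈ S, pairing m v = -1) : InCommonFace Δ S :=
  ⟨-m, fun x hx => by rw [pairing_neg_left]; linarith [hm x hx],
    fun v hv => by rw [pairing_neg_left, hS v hv, neg_neg]⟩

theorem LinearIndependent.sum_notMem_insert_zero_range {ι R M : Type*} [Fintype ι]
    [Nontrivial ι] [Semiring R] [Nontrivial R] [AddCommMonoid M] [Module R M] {v : ι → M}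
    (hv : LinearIndependent R v) : ∑ i, v i ∉ insert 0 (Set.range v) := by
  classical
  have hv' := Fintype.linearIndependent_iffₛ.1 hv
  rintro (h | ⟨j, hj⟩)
  · obtain ⟨i⟩ := (inferInstance : Nonempty ι)
    exact one_ne_zero (hv' (fun _ => 1) 0 (by simpa using h) i)
  · obtain ⟨i, hij⟩ := exists_ne j
    have := hv' (fun _ => 1) (Pi.single j 1) (by simp [Pi.single_apply, hj]) i
    simp [hij] at this

lemma exists_three_eq_neg_one_neg_one_zero (z : Fin 3 → ℤ) (hz : ∀ i, -1 ≤ z i)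
    (hsum : ∑ i, z i < -1) (hne : ¬ ∀ i, z i = -1) :
    ∃ i j k : Fin 3, i ≠ j ∧ i ≠ k ∧ j ≠ k ∧ z i = -1 ∧ z j = -1 ∧ z k = 0 := by
  rw [Fin.sum_univ_three] at hsum
  have hne' : ¬ (z 0 = -1 ∧ z 1 = -1 ∧ z 2 = -1) := fun h => hne (by simp [Fin.forall_fin_succ, h])
  have := hz 0; have := hz 1; have := hz 2
  have : (z 0 = -1 ∧ z 1 = -1 ∧ z 2 = 0) ∨ (z 0 = -1 ∧ z 2 = -1 ∧ z 1 = 0) ∨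
      (z 1 = -1 ∧ z 2 = -1 ∧ z 0 = 0) := by
    omega
  rcases this with h | h | h
  · exact ⟨0, 1, 2, by decide, by decide, by decide, h⟩
  · exact ⟨0, 2, 1, by decide, by decide, by decide, h⟩
  · exact ⟨1, 2, 0, by decide, by decide, by decide, h⟩

/-- If `v₁,v₂,v₃` are linearly independent lattice points of a
reflexive polytope `Δ ⊆ ℝ⁴` with `Cone(v₁,v₂,v₃) ∩ Δ ∩ ℤ⁴ = {0,v₁,v₂,v₃}` not lying in
a common proper face of `Δ`, then there is a lattice vertex `m` of `Δ*` and distinct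
indices `i, j` with `⟨m,vᵢ⟩ = ⟨m,vⱼ⟩ = -1` and `⟨m,v_k⟩ = 0` for the remaining `k`. -/
theorem exists_vertex_of_dual_for_three_cone
    (Δ : Set (Fin 4 → ℝ)) (hΔ : IsReflexive Δ)
    (v : Fin 3 → (Fin 4 → ℝ))
    (hvΔ : ∀ i, v i ∈ Δ) (hvL : ∀ i, IsLatticePt (v i))
    (hli : LinearIndependent ℝ v)
    (hcone : coneOf v ∩ Δ ∩ latticePts 4 = insert (0 : Fin 4 → ℝ) (Set.range v))
    (hface : ¬ InCommonFace Δ (Set.range v)) :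
    ∃ m : Fin 4 → ℝ, IsLatticePt m ∧ m ∈ Set.extremePoints ℝ (dualPolytope Δ) ∧
      ∃ i j k : Fin 3, i ≠ j ∧ i ≠ k ∧ j ≠ k ∧
        pairing m (v i) = -1 ∧ pairing m (v j) = -1 ∧ pairing m (v k) = 0 := by
  have hsum_cone : ∑ i, v i ∈ coneOf v := ⟨fun _ => 1, fun _ => zero_le_one, by simp⟩
  have hsum_notMem : ∑ i, v i ∉ Δ := fun h =>
    hli.sum_notMem_insert_zero_range (hcone ▸ ⟨⟨hsum_cone, h⟩, isLatticePt_sum hvL⟩)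
  obtain ⟨m, hmL, hmext, hmsum⟩ := hΔ.exists_extremePoint_pairing_lt hsum_notMem
  have hmD : m ∈ dualPolytope Δ := extremePoints_subset hmext
  choose z hz using fun i => hmL.exists_pairing_eq_intCast (hvL i)
  have hz_ge : ∀ i, -1 ≤ z i := fun i => by exact_mod_cast hz i ▸ hmD (v i) (hvΔ i)
  have hz_sum : ∑ i, z i < -1 := by
    rw [pairing_eq_dotProduct, dotProduct_sum] at hmsum
    exact_mod_cast (Finset.sum_congr rfl fun i _ => hz i) ▸ hmsum
  have hz_ne : ¬ ∀ i, z i = -1 := fun h => hface <|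
    inCommonFace_of_pairing_eq_neg_one hmD (by rintro _ ⟨i, rfl⟩; simp [hz, h])
  obtain ⟨i, j, k, hij, hik, hjk, hi, hj, hk⟩ :=
    exists_three_eq_neg_one_neg_one_zero z hz_ge hz_sum hz_ne
  exact ⟨m, hmL, hmext, i, j, k, hij, hik, hjk, by simp [hz, hi, hj, hk]⟩
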